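/- Let X maximize the weighted welfare ∑_i λ_i u_i(·) over fractional allocations for a strictly positive λ, and let Z be any allocation (fractional or discrete) obtained from X by reallocating each object o only among agents i with x_{io} > 0 (i.e., z_{io} > 0 implies x_{io} > 0). Then Z also maximizes ∑_i λ_i u_i(·), and hence Z is fractionally Pareto-optimal. -/

import Mathlib

/-- `X` is a fractional allocation: nonnegative entries, each object fully allocated. -/
def IsAlloc (n m : ℕ) (X : Fin n → Fin m → ℝ) : Prop :=
  (∀ i o, 0 ≤ X i o) ∧ ∀ o, ∑ i, X i o = 1

/-- Agent `i`'s additive utility under allocation `X` with utility matrix `U`. -/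
def util {n m : ℕ} (U X : Fin n → Fin m → ℝ) (i : Fin n) : ℝ :=
  ∑ o, U i o * X i o

/-- `X` is fractionally Pareto-optimal: no allocation weakly dominates it with one strict gain. -/
def IsFPO (n m : ℕ) (U X : Fin n → Fin m → ℝ) : Prop :=
  ¬ ∃ Y, IsAlloc n m Y ∧ (∀ i, util U X i ≤ util U Y i) ∧ ∃ i, util U X i < util U Y i

/-- The consumption graph of allocation `X`: bipartite on agents ⊕ objects,
with an edge between agent `i` and object `o` iff `X i o > 0`. -/
def consGraph {n m : ℕ} (X : Fin n → Fin m → ℝ) : SimpleGraph (Fin n ⊕ Fin m) where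
  Adj v w :=
    (∃ i o, v = Sum.inl i ∧ w = Sum.inr o ∧ 0 < X i o) ∨
    (∃ i o, v = Sum.inr o ∧ w = Sum.inl i ∧ 0 < X i o)
  symm := by
    refine ⟨?_⟩
    rintro v w (⟨i, o, rfl, rfl, h⟩ | ⟨i, o, rfl, rfl, h⟩)
    · exact Or.inr ⟨i, o, rfl, rfl, h⟩
    · exact Or.inl ⟨i, o, rfl, rfl, h⟩
  loopless := by
    refine ⟨?_⟩
    rintro v (⟨i, o, rfl, h, _⟩ | ⟨i, o, rfl, h, _⟩) <;> simp_all

/-!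
If `X` maximizes the weighted welfare and `X i o > 0`, handing agent `i`'s share of `o` to any
agent `j` cannot raise the welfare, so `λⱼ uⱼₒ ≤ λᵢ uᵢₒ`. Thus all holders of `o` under `X`
share the column maximum of `λ uₒ`, and any allocation supported inside `X`'s support collects
exactly that maximum from each object, i.e. the optimal welfare.
-/

open Finset

section LinearObjective

variable {n m : ℕ}

/-- With `w i o = λᵢ uᵢₒ` this is the weighted welfare; summing object-major lets it split
into columns. -/
def welfare (w Y : Fin n → Fin m → ℝ) : ℝ :=
  ∑ o, ∑ i, w i o * Y i o

lemma sum_mul_util_eq_welfare (lam : Fin n → ℝ) (U Y : Fin n → Fin m → ℝ) :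
    ∑ i, lam i * util U Y i = welfare (fun i o => lam i * U i o) Y := by
  simp only [util, welfare, mul_sum, mul_assoc]
  exact sum_comm

/-- Hand agent `i`'s whole share of object `o` over to agent `j`. -/
def shiftShare (X : Fin n → Fin m → ℝ) (o : Fin m) (i j : Fin n) : Fin n → Fin m → ℝ :=
  fun k p => X k p + if p = o then (Pi.single j (X i o) - Pi.single i (X i o) : Fin n → ℝ) k else 0

lemma isAlloc_shiftShare {X : Fin n → Fin m → ℝ} (hX : IsAlloc n m X) (o : Fin m) {i j : Fin n}
    (hij : i ≠ j) : IsAlloc n m (shiftShare X o i j) := by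
  obtain ⟨hnn, hsum⟩ := hX
  refine ⟨fun k p => ?_, fun p => ?_⟩
  · simp only [shiftShare]
    split_ifs with hp
    · subst hp
      rcases eq_or_ne k i with rfl | hki
      · simp [hij]
      · rcases eq_or_ne k j with rfl | hkj
        · simp only [Pi.sub_apply, Pi.single_eq_same, Pi.single_eq_of_ne hki, sub_zero]
          linarith [hnn k p, hnn i p]
        · simp [hki, hkj, hnn k p]
    · simpa using hnn k p
  · simp only [shiftShare, sum_add_distrib, hsum p]
    split_ifs <;> simp [sum_sub_distrib]

lemma welfare_shiftShare (w X : Fin n → Fin m → ℝ) (o : Fin m) (i j : Fin n) :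
    welfare w (shiftShare X o i j) = welfare w X + X i o * (w j o - w i o) := by
  simp only [welfare, shiftShare, mul_add, sum_add_distrib, mul_ite, mul_zero, Pi.sub_apply,
    Pi.single_apply, mul_sub, sum_ite_irrel, sum_sub_distrib, sum_ite_eq', mem_univ, ↓reduceIte,
    sum_const_zero]
  ring

variable {w X : Fin n → Fin m → ℝ}

lemma le_of_isMax_welfare (hX : IsAlloc n m X)
    (hmax : ∀ Y, IsAlloc n m Y → welfare w Y ≤ welfare w X) {o : Fin m} {i : Fin n}
    (hio : 0 < X i o) (j : Fin n) : w j o ≤ w i o := by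
  rcases eq_or_ne i j with rfl | hij
  · rfl
  have hshift := hmax _ (isAlloc_shiftShare hX o hij)
  rw [welfare_shiftShare] at hshift
  nlinarith

lemma sum_mul_eq_of_forall_pos {c y : Fin n → ℝ} {a : ℝ} (hy : ∀ k, 0 ≤ y k)
    (hsum : ∑ k, y k = 1) (hc : ∀ k, 0 < y k → c k = a) : ∑ k, c k * y k = a := by
  have hterm : ∀ k, c k * y k = a * y k := by
    intro k
    rcases (hy k).eq_or_lt with hk | hk
    · simp [← hk]
    · rw [hc k hk]
  simp [hterm, ← mul_sum, hsum]

lemma welfare_eq_of_support_subset (hX : IsAlloc n m X)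
    (hmax : ∀ Y, IsAlloc n m Y → welfare w Y ≤ welfare w X) {Z : Fin n → Fin m → ℝ}
    (hZ : IsAlloc n m Z) (hsupp : ∀ i o, 0 < Z i o → 0 < X i o) :
    welfare w Z = welfare w X := by
  refine sum_congr rfl fun o _ => ?_
  obtain ⟨i₀, hi₀⟩ : ∃ i₀, 0 < X i₀ o := by
    by_contra! h
    linarith [sum_nonpos fun k (_ : k ∈ univ) => h k, hX.2 o]
  have hweight : ∀ k, 0 < X k o → w k o = w i₀ o := fun k hk =>
    le_antisymm (le_of_isMax_welfare hX hmax hi₀ k) (le_of_isMax_welfare hX hmax hk i₀)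
  rw [sum_mul_eq_of_forall_pos (hZ.1 · o) (hZ.2 o) fun k hk => hweight k (hsupp k o hk),
    sum_mul_eq_of_forall_pos (hX.1 · o) (hX.2 o) hweight]

end LinearObjective

lemma isFPO_of_isMax_weighted_welfare {n m : ℕ} {U Z : Fin n → Fin m → ℝ} {lam : Fin n → ℝ}
    (hlam : ∀ i, 0 < lam i)
    (hmax : ∀ Y, IsAlloc n m Y → ∑ i, lam i * util U Y i ≤ ∑ i, lam i * util U Z i) :
    IsFPO n m U Z := by
  rintro ⟨Y, hY, hle, i, hlt⟩
  have hgain : ∑ k, lam k * util U Z k < ∑ k, lam k * util U Y k :=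
    sum_lt_sum (fun k _ => mul_le_mul_of_nonneg_left (hle k) (hlam k).le)
      ⟨i, mem_univ i, mul_lt_mul_of_pos_left hlt (hlam i)⟩
  exact (hmax Y hY).not_gt hgain

/-- Reallocating each object only among its fractional holders preserves maximality of
weighted welfare, hence preserves fPO. -/
theorem realloc_within_support_preserves_fPO (n m : ℕ) (U X Z : Fin n → Fin m → ℝ)
    (lam : Fin n → ℝ) (hlam : ∀ i, 0 < lam i)
    (hX : IsAlloc n m X)
    (hmax : ∀ Y, IsAlloc n m Y → ∑ i, lam i * util U Y i ≤ ∑ i, lam i * util U X i)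
    (hZ : IsAlloc n m Z)
    (hsupp : ∀ i o, 0 < Z i o → 0 < X i o) :
    (∀ Y, IsAlloc n m Y → ∑ i, lam i * util U Y i ≤ ∑ i, lam i * util U Z i) ∧
      IsFPO n m U Z := by
  have hmaxW : ∀ Y, IsAlloc n m Y →
      welfare (fun i o => lam i * U i o) Y ≤ welfare (fun i o => lam i * U i o) X := by
    simpa only [sum_mul_util_eq_welfare] using hmax
  have hZX : ∑ i, lam i * util U Z i = ∑ i, lam i * util U X i := by
    simpa only [sum_mul_util_eq_welfare] using welfare_eq_of_support_subset hX hmaxW hZ hsupp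
  have hmaxZ : ∀ Y, IsAlloc n m Y → ∑ i, lam i * util U Y i ≤ ∑ i, lam i * util U Z i :=
    fun Y hY => hZX ▸ hmax Y hY
  exact ⟨hmaxZ, isFPO_of_isMax_weighted_welfare hlam hmaxZ⟩
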